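/- Define the sequence (p_i) by p_0 = 2 and p_{i+1} = n·p_i·(n-4)/((n-4·p_i)(n+4)) as long as p_i < n/4, for an integer n ≥ 9. Then (p_i) is strictly increasing and there exists an index i with p_i ≥ n/4 (i.e. the recursion terminates; the sequence cannot converge to a finite limit l ≥ 2, since the only fixed point of the recursion is l = 2n/(n+4) < 2). -/
import Mathlib


/-- The bootstrap recursion: p₀ = 2, p_{i+1} = n·p_i·(n-4)/((n-4p_i)(n+4))
as long as p_i < n/4 (and we freeze the sequence once p_i ≥ n/4). -/
noncomputable def bootstrapSeq (n : ℕ) : ℕ → ℝ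
  | 0 => 2
  | i + 1 =>
      let p := bootstrapSeq n i
      if p < (n : ℝ) / 4 then
        (n : ℝ) * p * ((n : ℝ) - 4) / (((n : ℝ) - 4 * p) * ((n : ℝ) + 4))
      else p

/-- For n ≥ 9, the bootstrap sequence is strictly increasing as long as p_i < n/4,
and the recursion terminates: some p_i reaches n/4. -/
theorem stmt_3 (n : ℕ) (hn : 9 ≤ n) :
    (∀ i : ℕ, bootstrapSeq n i < (n : ℝ) / 4 → bootstrapSeq n i < bootstrapSeq n (i + 1)) ∧
      ∃ i : ℕ, (n : ℝ) / 4 ≤ bootstrapSeq n i := by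
  have hn9 : (9:ℝ) ≤ (n:ℝ) := by exact_mod_cast hn
  set c : ℝ := (n:ℝ) * ((n:ℝ) - 4) / (((n:ℝ) - 8) * ((n:ℝ) + 4)) with hc
  have hDen : (0:ℝ) < ((n:ℝ) - 8) * ((n:ℝ) + 4) := by nlinarith
  have hc1 : 1 < c := by
    rw [hc, lt_div_iff₀ hDen]; nlinarith
  have hgrow : ∀ p : ℝ, 2 ≤ p → p < (n:ℝ)/4 →
      c * p ≤ (n:ℝ) * p * ((n:ℝ) - 4) / (((n:ℝ) - 4 * p) * ((n:ℝ) + 4)) := by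
    intro p hp2 hp4
    have hD : (0:ℝ) < ((n:ℝ) - 4 * p) * ((n:ℝ) + 4) := by
      apply mul_pos <;> nlinarith
    rw [hc, div_mul_eq_mul_div, div_le_div_iff₀ hDen hD]
    have key : (0:ℝ) ≤ (n:ℝ)*p*((n:ℝ)-4)*((n:ℝ)+4)*(4*p-8) := by
      apply mul_nonneg
      apply mul_nonneg
      apply mul_nonneg
      apply mul_nonneg
      all_goals nlinarith
    nlinarith [key]
  have h2 : ∀ i, 2 ≤ bootstrapSeq n i := by
    intro i
    induction i with
    | zero => simp [bootstrapSeq]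
    | succ i ih =>
      show 2 ≤ bootstrapSeq n (i+1)
      rw [bootstrapSeq]
      split_ifs with h
      · calc (2:ℝ) ≤ c * bootstrapSeq n i := by nlinarith
          _ ≤ _ := hgrow _ ih h
      · exact ih
  have hstep : ∀ i, bootstrapSeq n i < (n:ℝ)/4 →
      c * bootstrapSeq n i ≤ bootstrapSeq n (i+1) := by
    intro i h
    rw [bootstrapSeq]
    rw [if_pos h]
    exact hgrow _ (h2 i) h
  have hmono : ∀ i, bootstrapSeq n i < (n:ℝ)/4 → bootstrapSeq n i < bootstrapSeq n (i+1) := by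
    intro i h
    have := hstep i h
    have := h2 i
    nlinarith
  refine ⟨hmono, ?_⟩
  by_contra hcon
  push_neg at hcon
  have hpow : ∀ i, 2 * c ^ i ≤ bootstrapSeq n i := by
    intro i
    induction i with
    | zero => simp [bootstrapSeq]
    | succ i ih =>
      have := hstep i (hcon i)
      have hcpos : (0:ℝ) ≤ c := by linarith
      calc 2 * c ^ (i+1) = c * (2 * c ^ i) := by ring
        _ ≤ c * bootstrapSeq n i := by nlinarith [pow_nonneg hcpos i]
        _ ≤ _ := this
  obtain ⟨i, hi⟩ := pow_unbounded_of_one_lt ((n:ℝ)/8) hc1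
  have := hpow i
  have := hcon i
  nlinarith
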